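/- Let F be a lattice filter of an MV-algebra L. Then K(F) ⊸ F = F. -/

import Mathlib

/-- An MV-algebra: a commutative monoid `(L, ⊕, 0)` with a unary `¬` satisfying
`¬¬x = x`, `x ⊕ ¬0 = ¬0` and `¬(¬x ⊕ y) ⊕ y = ¬(¬y ⊕ x) ⊕ x`. -/
class MV (L : Type*) where
  add : L → L → L
  zero : L
  neg : L → L
  add_assoc : ∀ x y z : L, add (add x y) z = add x (add y z)
  add_comm : ∀ x y : L, add x y = add y x
  add_zero : ∀ x : L, add x zero = x
  neg_neg : ∀ x : L, neg (neg x) = x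
  add_neg_zero : ∀ x : L, add x (neg zero) = neg zero
  luk : ∀ x y : L, add (neg (add (neg x) y)) y = add (neg (add (neg y) x)) x

namespace MV

variable {L : Type*} [MV L]

/-- `1 = ¬0`. -/
def one : L := neg zero

/-- `x → y = ¬x ⊕ y`. -/
def imp (x y : L) : L := add (neg x) y

/-- `x ⊗ y = ¬(¬x ⊕ ¬y)`. -/
def otimes (x y : L) : L := neg (add (neg x) (neg y))

/-- `x ∨ y = (x → y) → y`. -/
def join (x y : L) : L := imp (imp x y) y

/-- `x ∧ y = ¬(¬x ∨ ¬y)`. -/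
def meet (x y : L) : L := neg (join (neg x) (neg y))

/-- `x ≤ y` iff `x → y = 1`. -/
def le (x y : L) : Prop := imp x y = one

/-- `x < y` iff `x ≤ y` and `x ≠ y`. -/
def lt (x y : L) : Prop := le x y ∧ x ≠ y

/-- A lattice filter: nonempty, upward closed, closed under `∧`. -/
def IsLatticeFilter (F : Set L) : Prop :=
  F.Nonempty ∧ (∀ x y : L, x ∈ F → le x y → y ∈ F) ∧
    (∀ x y : L, x ∈ F → y ∈ F → meet x y ∈ F)

/-- A prime lattice filter: a proper lattice filter such that
`x ∨ y ∈ F` implies `x ∈ F` or `y ∈ F`. -/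
def IsPrimeFilter (F : Set L) : Prop :=
  IsLatticeFilter F ∧ F ≠ Set.univ ∧ ∀ x y : L, join x y ∈ F → x ∈ F ∨ y ∈ F

/-- `F ⊸ G = {z | ∀ a ∉ G, z → a ∉ F}` (intended for `F ⊆ G`). -/
def lolli (F G : Set L) : Set L := {z | ∀ a ∉ G, imp z a ∉ F}

/-- The general `F ⊸ G = (F ∩ G) ⊸ G`. -/
def lolli' (F G : Set L) : Set L := lolli (F ∩ G) G

/-- The kernel `K(F) = {z | ∀ a ∉ F, z → a ∉ F}`. -/
def ker (F : Set L) : Set L := {z | ∀ a ∉ F, imp z a ∉ F}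

/-- `F⁺ = {z | ¬z ∉ F}`. -/
def plus (F : Set L) : Set L := {z | neg z ∉ F}

/-- An implication filter: contains `1` and is closed under modus ponens. -/
def IsImplicationFilter (P : Set L) : Prop :=
  (one : L) ∈ P ∧ ∀ x y : L, x ∈ P → imp x y ∈ P → y ∈ P

/-- `x ~_P y` iff `x → y ∈ P` and `y → x ∈ P`. -/
def simP (P : Set L) (x y : L) : Prop := imp x y ∈ P ∧ imp y x ∈ P

/-- `J_u(F, P) = {z | ∃ f ∈ F, z ~_P f}`. -/
def Ju (F P : Set L) : Set L := {z | ∃ f ∈ F, simP P z f}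

/-- `J_d(F, P) = (J_u(F⁺, P))⁺`. -/
def Jd (F P : Set L) : Set L := plus (Ju (plus F) P)

end MV

open MV

namespace MV

variable {L : Type*} [MV L]

protected lemma zero_add (x : L) : add zero x = x := by
  rw [MV.add_comm, MV.add_zero]

lemma neg_add_self (x : L) : add (neg x) x = one := by
  have h := luk x (neg zero : L)
  rwa [add_neg_zero, MV.neg_neg, MV.zero_add, eq_comm] at h

protected lemma imp_self (x : L) : imp x x = one := neg_add_self x

lemma one_imp (x : L) : imp one x = x := by
  rw [imp, one, MV.neg_neg, MV.zero_add]

lemma le_join_left (x y : L) : le x (join x y) := by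
  simp only [le, join, imp]
  rw [luk, ← MV.add_assoc, MV.add_comm (neg x), MV.add_assoc,
    neg_add_self, one, add_neg_zero]

lemma one_mem_ker (F : Set L) : one ∈ ker F := by
  intro a ha
  rwa [one_imp]

lemma lolli_ker_subset (F : Set L) : lolli (ker F) F ⊆ F := by
  intro z hz
  by_contra hzF
  exact hz z hzF (MV.imp_self z ▸ one_mem_ker F)

lemma subset_lolli_ker {F : Set L} (hup : ∀ x y : L, x ∈ F → le x y → y ∈ F) :
    F ⊆ lolli (ker F) F :=
  fun z hz a ha hza => hza a ha (hup z (join z a) hz (le_join_left z a))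

end MV

/-- For a lattice filter `F`, `K(F) ⊸ F = F`. -/
theorem stmt_6 {L : Type*} [MV L] (F : Set L) (hF : IsLatticeFilter F) :
    lolli (ker F) F = F :=
  (lolli_ker_subset F).antisymm (subset_lolli_ker hF.2.1)
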